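/- arXiv:1706.07970 — 3 statements merged into one kernel-verified Lean document; each statement's English description precedes it below -/
import Mathlib

section
/- The projective special linear group PSL(2,7) (equivalently PSL(3,2), a simple group of order 168) is a Hurwitz group: there exist x, y ∈ PSL(2,7) with x of order 2, y of order 3, x*y of order 7, and ⟨x, y⟩ = PSL(2,7). -/
/-! With `S = !![0, -1; 1, 0]`, `T = !![1, 1; 0, 1]` and `U = S⁻¹ T = !![0, 1; -1, -1]` in
SL(2, 𝔽_p), `S²` is central and `U³ = 1`, while neither `S` nor `U` is scalar, so their images in
PSL(2, p) have orders 2 and 3; their product `T` is a transvection of order `p`. Conjugating `T` by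
`S` gives the lower transvection, and the two elementary transvections generate SL(2, 𝔽_p). -/

/-- PSL(2,7): the quotient of SL(2,7) by its center. -/
abbrev PSL27 : Type :=
  Matrix.SpecialLinearGroup (Fin 2) (ZMod 7) ⧸
    Subgroup.center (Matrix.SpecialLinearGroup (Fin 2) (ZMod 7))

open scoped MatrixGroups

theorem QuotientGroup.orderOf_mk_eq_prime {G : Type*} [Group G] {N : Subgroup G} [N.Normal]
    {p : ℕ} [Fact p.Prime] {g : G} (hp : g ^ p ∈ N) (hg : g ∉ N) :
    orderOf (g : G ⧸ N) = p :=
  orderOf_eq_prime (by rwa [← QuotientGroup.mk_pow, QuotientGroup.eq_one_iff])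
    (by rwa [Ne, QuotientGroup.eq_one_iff])

namespace Matrix.SpecialLinearGroup

theorem transvection_pow {ι F : Type*} [DecidableEq ι] [Fintype ι] [CommRing F] {i j : ι}
    (hij : i ≠ j) (b : F) (n : ℕ) : transvection hij b ^ n = transvection hij (n • b) := by
  induction n with
  | zero => simp
  | succ n ih => rw [pow_succ, ih, ← transvection_add, succ_nsmul]

namespace SL2

theorem closure_transvection_one_eq_top (p : ℕ) [Fact p.Prime] :
    Subgroup.closure {transvection zero_ne_one (1 : ZMod p), transvection one_ne_zero 1} =
      (⊤ : Subgroup SL(2, ZMod p)) := by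
  refine eq_top_iff.2 fun A _ ↦ SL2.transvection_induction _ (fun i j hij c ↦ ?_)
    (fun _ _ ↦ mul_mem) A
  have hone : transvection hij (1 : ZMod p) ∈
      Subgroup.closure {transvection zero_ne_one 1, transvection one_ne_zero 1} := by
    apply Subgroup.subset_closure
    fin_cases i <;> fin_cases j <;> first | exact absurd rfl hij | simp
  rw [← ZMod.natCast_zmod_val c, ← nsmul_one, ← transvection_pow]
  exact pow_mem hone _

variable (F : Type*) [CommRing F]

def S : SL(2, F) := ⟨!![0, -1; 1, 0], by simp [det_fin_two_of]⟩

def U : SL(2, F) := ⟨!![0, 1; -1, -1], by simp [det_fin_two_of]⟩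

variable {F}

@[simp]
theorem coe_S : (S F : Matrix (Fin 2) (Fin 2) F) = !![0, -1; 1, 0] := rfl

@[simp]
theorem coe_U : (U F : Matrix (Fin 2) (Fin 2) F) = !![0, 1; -1, -1] := rfl

theorem S_mul_U : S F * U F = transvection zero_ne_one 1 := by
  ext i j
  fin_cases i <;> fin_cases j <;> simp [transvection_coe]

theorem S_mul_transvection (c : F) :
    S F * transvection one_ne_zero c = transvection zero_ne_one (-c) * S F := by
  ext i j
  fin_cases i <;> fin_cases j <;> simp [transvection_coe, mul_apply, Fin.sum_univ_two]

theorem U_pow_three : U F ^ 3 = 1 := by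
  ext i j
  fin_cases i <;> fin_cases j <;> simp [pow_succ]

theorem S_sq_mem_center : S F ^ 2 ∈ Subgroup.center SL(2, F) :=
  SpecialLinearGroup.mem_center_iff.2 ⟨-1, by norm_num, by
    ext i j
    fin_cases i <;> fin_cases j <;> simp [sq]⟩

theorem S_notMem_center [Nontrivial F] : S F ∉ Subgroup.center SL(2, F) := by
  intro h
  obtain ⟨r, -, hr⟩ := SpecialLinearGroup.mem_center_iff.1 h
  simpa using congr($hr 1 0)

theorem U_notMem_center [Nontrivial F] : U F ∉ Subgroup.center SL(2, F) := by
  intro h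
  obtain ⟨r, -, hr⟩ := SpecialLinearGroup.mem_center_iff.1 h
  simpa using congr($hr 1 0)

theorem closure_S_U_eq_top (p : ℕ) [Fact p.Prime] :
    Subgroup.closure {S (ZMod p), U (ZMod p)} = ⊤ := by
  set H := Subgroup.closure {S (ZMod p), U (ZMod p)}
  have hS : S (ZMod p) ∈ H := Subgroup.subset_closure (by simp)
  have hT : transvection zero_ne_one (1 : ZMod p) ∈ H :=
    S_mul_U (F := ZMod p) ▸ mul_mem hS (Subgroup.subset_closure (by simp))
  have hT' : transvection one_ne_zero (1 : ZMod p) ∈ H := by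
    rw [eq_inv_mul_of_mul_eq (S_mul_transvection 1), ← transvection_inv]
    exact mul_mem (inv_mem hS) (mul_mem (inv_mem hT) hS)
  rw [eq_top_iff, ← closure_transvection_one_eq_top p, Subgroup.closure_le]
  simp [Set.insert_subset_iff, hT, hT']

end SL2

end Matrix.SpecialLinearGroup

open Matrix.SpecialLinearGroup SL2 QuotientGroup in
theorem Matrix.ProjectiveSpecialLinearGroup.exists_orderOf_two_three_prime_closure_eq_top
    (p : ℕ) [Fact p.Prime] :
    ∃ x y : PSL(2, ZMod p), orderOf x = 2 ∧ orderOf y = 3 ∧ orderOf (x * y) = p ∧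
      Subgroup.closure {x, y} = ⊤ := by
  refine ⟨S (ZMod p), U (ZMod p), orderOf_mk_eq_prime S_sq_mem_center S_notMem_center,
    orderOf_mk_eq_prime (by simp [U_pow_three]) U_notMem_center, ?_, ?_⟩
  · rw [← mk_mul, S_mul_U]
    exact orderOf_mk_eq_prime (by simp [transvection_pow]) (by simp [transvection_mem_center_iff])
  · rw [← Set.image_pair, ← coe_mk', ← MonoidHom.map_closure, closure_S_U_eq_top,
      Subgroup.map_top_of_surjective _ (mk'_surjective _)]

theorem psl27_is_hurwitz :
    ∃ x y : PSL27, orderOf x = 2 ∧ orderOf y = 3 ∧ orderOf (x * y) = 7 ∧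
      Subgroup.closure {x, y} = ⊤ :=
  have : Fact (Nat.Prime 7) := ⟨by norm_num⟩
  Matrix.ProjectiveSpecialLinearGroup.exists_orderOf_two_three_prime_closure_eq_top 7
end

section
/- The group PSL(2,8) = SL(2,8) of order 504 is a Hurwitz group: there exist x, y ∈ SL(2,8) with x of order 2, y of order 3, x*y of order 7, generating the whole group. -/
/-!
Let `α ∈ 𝔽₈` be a root of `X³ + X + 1`; it generates `𝔽₈ˣ`, which has order 7.
Put `z = diag(α, α⁻¹)` and `x = [[α², 1 + α + α²], [1, α²]]`. In characteristic 2 a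
nonidentity element of `SL(2)` has order 2 iff its trace is 0 and order 3 iff its trace
is 1; the diagonal entry `α²` of `x` is what makes `tr (x z) = 1`. So `x`, `y = x z` and
`x y = z` have orders 2, 3 and 7.

As an involution in characteristic 2, `x` is a transvection, and suitable conjugates of it
in `⟨x, y⟩` are a nontrivial upper and a nontrivial lower transvection. Conjugation by `z`
scales these by `α²`, which also generates `𝔽₈ˣ`, so `⟨x, y⟩` contains every transvection,
and the transvections generate `SL(2, 8)`.
-/

open scoped MatrixGroups

namespace Matrix.SpecialLinearGroup

variable {F : Type*} [Field F]

theorem diag2_mul (a b : F) (ha : a ≠ 0) (hb : b ≠ 0) :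
    diag2 a ha * diag2 b hb = diag2 (a * b) (mul_ne_zero ha hb) := by
  ext i j; fin_cases i <;> fin_cases j <;> simp [diag2_coe', mul_comm]

theorem diag2_pow (a : F) (ha : a ≠ 0) (n : ℕ) :
    diag2 a ha ^ n = diag2 (a ^ n) (pow_ne_zero n ha) := by
  induction n with
  | zero => ext i j; fin_cases i <;> fin_cases j <;> simp [diag2_coe']
  | succ n ih => simp only [pow_succ, ih, diag2_mul]

theorem diag2_eq_one_iff (a : F) (ha : a ≠ 0) : diag2 a ha = 1 ↔ a = 1 := by
  refine ⟨fun h => by simpa [diag2_coe'] using congr($h 0 0), fun h => ?_⟩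
  subst h
  ext i j; fin_cases i <;> fin_cases j <;> simp [diag2_coe']

theorem orderOf_diag2 (a : F) (ha : a ≠ 0) : orderOf (diag2 a ha) = orderOf a :=
  orderOf_eq_orderOf_iff.2 fun n => by rw [diag2_pow, diag2_eq_one_iff]

theorem coe_transvection_zero_one (b : F) :
    ((transvection zero_ne_one b : SL(2, F)) : Matrix (Fin 2) (Fin 2) F) = !![1, b; 0, 1] := by
  ext i j; fin_cases i <;> fin_cases j <;> simp [transvection_coe]

theorem coe_transvection_one_zero (b : F) :
    ((transvection one_ne_zero b : SL(2, F)) : Matrix (Fin 2) (Fin 2) F) = !![1, 0; b, 1] := by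
  ext i j; fin_cases i <;> fin_cases j <;> simp [transvection_coe]

theorem diag2_conj_transvection_zero_one (a : F) (ha : a ≠ 0) (b : F) :
    diag2 a ha * transvection zero_ne_one b * (diag2 a ha)⁻¹ =
      transvection zero_ne_one (a ^ 2 * b) := by
  rw [diag2_inv]
  ext i j; fin_cases i <;> fin_cases j <;> simp [diag2_coe, transvection_coe, mul_add] <;>
    field_simp

theorem inv_diag2_conj_transvection_one_zero (a : F) (ha : a ≠ 0) (b : F) :
    (diag2 a ha)⁻¹ * transvection one_ne_zero b * ((diag2 a ha)⁻¹)⁻¹ =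
      transvection one_ne_zero (a ^ 2 * b) := by
  rw [inv_inv, diag2_inv]
  ext i j; fin_cases i <;> fin_cases j <;> simp [diag2_coe, transvection_coe, mul_add] <;>
    field_simp

theorem eq_top_of_transvection_mem {H : Subgroup SL(2, F)}
    (h01 : ∀ c, transvection zero_ne_one c ∈ H)
    (h10 : ∀ c, transvection one_ne_zero c ∈ H) : H = ⊤ := by
  refine eq_top_iff.2 fun A _ => SL2.transvection_induction (· ∈ H) ?_ (fun _ _ => mul_mem) A
  intro i j hij c
  fin_cases i <;> fin_cases j
  exacts [absurd rfl hij, h01 c, h10 c, absurd rfl hij]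

theorem transvection_mem_of_conj_mem {H : Subgroup SL(2, F)} {i j : Fin 2} (hij : i ≠ j)
    {g : SL(2, F)} (hg : g ∈ H) {r : Fˣ} (hr : Submonoid.powers r = ⊤)
    (hconj : ∀ b, g * transvection hij b * g⁻¹ = transvection hij ((r : F) * b))
    {b₀ : F} (hb₀ : b₀ ≠ 0) (h₀ : transvection hij b₀ ∈ H) (c : F) :
    transvection hij c ∈ H := by
  rcases eq_or_ne c 0 with rfl | hc
  · simp
  have hpow (n : ℕ) : transvection hij ((r ^ n : Fˣ) * b₀) ∈ H := by
    induction n with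
    | zero => simpa using h₀
    | succ n ih =>
      rw [pow_succ', Units.val_mul, mul_assoc, ← hconj]
      exact mul_mem (mul_mem hg ih) (inv_mem hg)
  obtain ⟨n, hn⟩ := (Submonoid.mem_powers_iff _ _).1
    (hr ▸ Submonoid.mem_top (Units.mk0 _ (div_ne_zero hc hb₀)))
  simpa [hn, hb₀] using hpow n

end Matrix.SpecialLinearGroup

open Matrix.SpecialLinearGroup

section HurwitzGenerators

variable {F : Type*} [Field F] {α : F}

theorem ne_zero_of_cubic_eq_zero (hα : α ^ 3 + α + 1 = 0) : α ≠ 0 := by grind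

variable [CharP F 2]

theorem exists_cubic_eq_zero_of_card_eq_eight [Finite F] (hcard : Nat.card F = 8) :
    ∃ α : F, α ^ 3 + α + 1 = 0 := by
  have hunits : Nat.card Fˣ = 7 := by rw [Nat.card_units, hcard]
  have : Nontrivial Fˣ := Finite.one_lt_card_iff_nontrivial.1 (by omega)
  obtain ⟨g, hg⟩ := exists_ne (1 : Fˣ)
  have h7 : (g : F) ^ 7 = 1 := by
    rw [← Units.val_pow_eq_pow_val, ← hunits, pow_card_eq_one', Units.val_one]
  have h1 : (g : F) ≠ 1 := by simpa using hg
  -- `(X³ + X + 1) (X³ + X² + 1) = (X⁷ - 1) / (X - 1)` in characteristic 2, and `X³ + X² + 1`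
  -- is the reciprocal of `X³ + X + 1`.
  have : ((g : F) ^ 3 + g + 1) * ((g : F)⁻¹ ^ 3 + (g : F)⁻¹ + 1) = 0 := by grind
  rcases mul_eq_zero.1 this with h | h
  exacts [⟨_, h⟩, ⟨_, h⟩]

theorem orderOf_eq_seven_of_cubic_eq_zero (hα : α ^ 3 + α + 1 = 0) : orderOf α = 7 :=
  have : Fact (Nat.Prime 7) := ⟨by norm_num⟩
  orderOf_eq_prime (by grind) (by grind)

def hurwitzInvolution (hα : α ^ 3 + α + 1 = 0) : SL(2, F) :=
  ⟨!![α ^ 2, 1 + α + α ^ 2; 1, α ^ 2], by rw [Matrix.det_fin_two_of]; grind⟩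

variable (hα : α ^ 3 + α + 1 = 0)

local notation "𝐱" => hurwitzInvolution hα
local notation "𝐳" => diag2 α (ne_zero_of_cubic_eq_zero hα)

theorem coe_hurwitzInvolution :
    (𝐱 : Matrix (Fin 2) (Fin 2) F) = !![α ^ 2, 1 + α + α ^ 2; 1, α ^ 2] :=
  rfl

theorem hurwitzInvolution_mul_self : 𝐱 * 𝐱 = 1 := by
  refine Subtype.ext ?_
  simp only [coe_mul, coe_hurwitzInvolution, Matrix.mul_fin_two, coe_one, Matrix.one_fin_two]
  congr 2 <;> grind

theorem orderOf_hurwitzInvolution : orderOf 𝐱 = 2 :=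
  have : Fact (Nat.Prime 2) := ⟨by norm_num⟩
  orderOf_eq_prime (by rw [sq, hurwitzInvolution_mul_self])
    fun h => by simpa [coe_hurwitzInvolution] using congr($h 1 0)

theorem orderOf_hurwitzInvolution_mul_diag2 : orderOf (𝐱 * 𝐳) = 3 := by
  have : Fact (Nat.Prime 3) := ⟨by norm_num⟩
  refine orderOf_eq_prime (Subtype.ext ?_) fun h => ?_
  · simp only [coe_mul, coe_hurwitzInvolution, diag2_coe', pow_succ, pow_zero,
      Matrix.mul_fin_two, coe_one, Matrix.one_fin_two]
    congr 2 <;> grind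
  · simpa [coe_mul, coe_hurwitzInvolution, diag2_coe', ne_zero_of_cubic_eq_zero hα]
      using congr($h 1 0)

theorem conj_hurwitzInvolution_eq_transvection_zero_one :
    𝐱 * (𝐳 ^ 2)⁻¹ * 𝐱 * (𝐱 * (𝐳 ^ 2)⁻¹)⁻¹ = transvection zero_ne_one (α + α ^ 2) := by
  rw [mul_inv_rev, inv_inv, inv_eq_of_mul_eq_one_right (hurwitzInvolution_mul_self hα),
    diag2_pow, diag2_inv]
  refine Subtype.ext ?_
  simp only [coe_mul, coe_hurwitzInvolution, diag2_coe', coe_transvection_zero_one,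
    Matrix.mul_fin_two]
  congr 2 <;> grind

theorem conj_hurwitzInvolution_eq_transvection_one_zero :
    𝐱 * 𝐳 ^ 2 * 𝐱 * (𝐱 * 𝐳 ^ 2)⁻¹ = transvection one_ne_zero (1 + α ^ 2) := by
  rw [mul_inv_rev, inv_eq_of_mul_eq_one_right (hurwitzInvolution_mul_self hα), diag2_pow,
    diag2_inv]
  refine Subtype.ext ?_
  simp only [coe_mul, coe_hurwitzInvolution, diag2_coe', coe_transvection_one_zero,
    Matrix.mul_fin_two]
  congr 2 <;> grind

theorem closure_hurwitzInvolution_eq_top [Finite F] (hcard : Nat.card F = 8) :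
    Subgroup.closure {𝐱, 𝐱 * 𝐳} = ⊤ := by
  set H := Subgroup.closure {𝐱, 𝐱 * 𝐳}
  have hx : 𝐱 ∈ H := Subgroup.subset_closure (by simp)
  have hz : 𝐳 ∈ H := by
    simpa using mul_mem (inv_mem hx) (Subgroup.subset_closure (by simp) : 𝐱 * 𝐳 ∈ H)
  have hconj {g : SL(2, F)} (hg : g ∈ H) : g * 𝐱 * g⁻¹ ∈ H :=
    mul_mem (mul_mem hg hx) (inv_mem hg)
  have hgen :
      Submonoid.powers (Units.mk0 (α ^ 2) (pow_ne_zero 2 (ne_zero_of_cubic_eq_zero hα))) = ⊤ := by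
    have : Fact (Nat.Prime 7) := ⟨by norm_num⟩
    refine eq_top_iff.2 fun u _ => mem_powers_of_prime_card (by rw [Nat.card_units, hcard]) ?_
    rw [Ne, Units.ext_iff, Units.val_mk0, Units.val_one]
    grind
  apply eq_top_of_transvection_mem
  · refine transvection_mem_of_conj_mem _ hz hgen (diag2_conj_transvection_zero_one _ _)
      (b₀ := α + α ^ 2) (by grind) ?_
    rw [← conj_hurwitzInvolution_eq_transvection_zero_one hα]
    exact hconj (mul_mem hx (inv_mem (pow_mem hz 2)))
  · refine transvection_mem_of_conj_mem _ (inv_mem hz) hgen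
      (inv_diag2_conj_transvection_one_zero _ _) (b₀ := 1 + α ^ 2) (by grind) ?_
    rw [← conj_hurwitzInvolution_eq_transvection_one_zero hα]
    exact hconj (mul_mem hx (pow_mem hz 2))

end HurwitzGenerators

theorem exists_hurwitz_generators_of_card_eq_eight {F : Type*} [Field F] [CharP F 2] [Finite F]
    (hcard : Nat.card F = 8) :
    ∃ x y : SL(2, F), orderOf x = 2 ∧ orderOf y = 3 ∧ orderOf (x * y) = 7 ∧
      Subgroup.closure {x, y} = ⊤ := by
  obtain ⟨α, hα⟩ := exists_cubic_eq_zero_of_card_eq_eight hcard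
  refine ⟨hurwitzInvolution hα, hurwitzInvolution hα * diag2 α (ne_zero_of_cubic_eq_zero hα),
    orderOf_hurwitzInvolution hα, orderOf_hurwitzInvolution_mul_diag2 hα, ?_,
    closure_hurwitzInvolution_eq_top hα hcard⟩
  rw [← mul_assoc, hurwitzInvolution_mul_self, one_mul, orderOf_diag2,
    orderOf_eq_seven_of_cubic_eq_zero hα]

theorem sl2_8_is_hurwitz :
    ∃ x y : Matrix.SpecialLinearGroup (Fin 2) (GaloisField 2 3),
      orderOf x = 2 ∧ orderOf y = 3 ∧ orderOf (x * y) = 7 ∧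
        Subgroup.closure {x, y} = ⊤ :=
  exists_hurwitz_generators_of_card_eq_eight (GaloisField.card 2 3 (by norm_num))
end

section
/- Frobenius's structure constant formula: let G be a finite group and C₁, C₂, C₃ conjugacy classes of G with fixed representatives g₁ ∈ C₁, g₂ ∈ C₂, g₃ ∈ C₃. Then the number of triples (x, y, z) ∈ C₁ × C₂ × C₃ with x*y*z = 1 equals (|C₁|·|C₂|·|C₃|/|G|) · Σ_{χ ∈ Irr(G)} χ(g₁)χ(g₂)χ(g₃)/χ(1), where Irr(G) is the set of irreducible complex characters of G. -/
/-!
Column orthogonality, `∑_χ χ(1) χ(w) = |G|` for `w = 1` and `0` otherwise, turns the count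
into `|G|⁻¹ ∑_χ χ(1) ∑_{x ∈ C₁, y ∈ C₂, z ∈ C₃} χ(xyz)`. By Schur's lemma the class sum
`∑_{x ∈ C} ρ(x)` acts on an irreducible representation as the scalar `|C| χ(g) / χ(1)`; applying
this to `C₃` and then to `C₂` evaluates the inner sum as
`|C₁| |C₂| |C₃| χ(g₁) χ(g₂) χ(g₃) / χ(1)²`.

Column orthogonality comes from decomposing the regular character `|G| · [w = 1]` into
irreducible characters, where row orthogonality shows that `χ` occurs `χ(1)` times. The
decomposition exists because, all objects of `FDRep` being injective (Maschke), a representation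
that is neither zero nor simple is a biproduct of two nonzero ones.
-/

open CategoryTheory Limits Module

universe u

namespace CategoryTheory

variable {C : Type*} [Category C]

theorem exists_mono_ne_zero_not_isIso_of_not_simple [HasZeroMorphisms C] [HasZeroObject C]
    {X : C} (hX : ¬IsZero X) (hs : ¬Simple X) :
    ∃ (Y : C) (f : Y ⟶ X), Mono f ∧ f ≠ 0 ∧ ¬IsIso f := by
  by_contra! h
  refine hs ⟨fun {Y} f _ => ⟨fun hf hf0 => hX ?_, fun hf0 => h Y f inferInstance hf0⟩⟩
  subst hf0
  exact ((isIsoZero_iff_source_target_isZero Y X).mp hf).2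

theorem exists_isBilimit_of_not_simple [Preadditive C] [HasZeroObject C] [HasCokernels C]
    [∀ Y : C, Injective Y] {X : C} (hX : ¬IsZero X) (hs : ¬Simple X) :
    ∃ (Y Z : C) (b : BinaryBicone Y Z), Nonempty b.IsBilimit ∧ b.pt = X ∧ ¬IsZero Y ∧
      ¬IsZero Z := by
  obtain ⟨Y, f, hf, hf0, hfiso⟩ := exists_mono_ne_zero_not_isIso_of_not_simple hX hs
  have : IsSplitMono f :=
    IsSplitMono.mk' ⟨Injective.factorThru (𝟙 Y) f, Injective.comp_factorThru _ _⟩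
  let b := binaryBiconeOfIsSplitMonoOfCokernel (cokernelIsCokernel f)
  have hb : b.IsBilimit := isBilimitBinaryBiconeOfIsSplitMonoOfCokernel _
  refine ⟨Y, _, b, ⟨hb⟩, rfl, fun hY => hf0 (hY.eq_of_src _ _), fun hZ => hfiso ?_⟩
  have htotal := IsBilimit.binary_total hb
  simp only [hZ.eq_of_tgt b.snd 0, Limits.zero_comp, add_zero] at htotal
  exact ⟨b.fst, b.inl_fst, htotal⟩

end CategoryTheory

theorem natCard_subtype_mul_mul_eq_one {M : Type*} [Mul M] [One M] [DecidableEq M]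
    (S₁ S₂ S₃ : Finset M) :
    Nat.card {t : M × M × M // t.1 ∈ S₁ ∧ t.2.1 ∈ S₂ ∧ t.2.2 ∈ S₃ ∧ t.1 * t.2.1 * t.2.2 = 1} =
      ∑ t ∈ S₁ ×ˢ S₂ ×ˢ S₃, if t.1 * t.2.1 * t.2.2 = 1 then 1 else 0 := by
  rw [Finset.sum_boole, Nat.cast_id, ← Nat.card_eq_finsetCard]
  exact Nat.card_congr (Equiv.subtypeEquivRight fun t => by simp [and_assoc])

theorem conj_mem_of_forall_mem_iff_isConj {G : Type*} [Group G] {g : G} {S : Finset G}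
    (hS : ∀ x, x ∈ S ↔ IsConj g x) (h : G) : ∀ x ∈ S, h * x * h⁻¹ ∈ S := fun x hx =>
  (hS _).mpr (((hS x).mp hx).trans (isConj_iff.mpr ⟨h, rfl⟩))

namespace FDRep

section Monoid

variable {k G : Type u} [Field k] [Monoid G]

theorem isZero_iff_finrank_eq_zero {X : FDRep k G} : IsZero X ↔ finrank k X = 0 := by
  refine ⟨fun h => finrank_zero_iff.mpr ⟨fun x y => ?_⟩, fun h => ?_⟩
  · have h0 : ∀ x : X, x = 0 := fun x =>
      LinearMap.congr_fun (congrArg (fun f : X ⟶ X => f.hom.hom.hom) (h.eq_of_src (𝟙 X) 0))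
        x
    rw [h0 x, h0 y]
  · have : Subsingleton X := finrank_zero_iff.mp h
    refine ⟨fun Y => ⟨⟨⟨0⟩, fun f => ?_⟩⟩, fun Y => ⟨⟨⟨0⟩, fun f => ?_⟩⟩⟩
    · ext x; simp [Subsingleton.elim x 0]
    · ext x; exact Subsingleton.elim _ _

theorem char_eq_zero_of_finrank_eq_zero {X : FDRep k G} (h : finrank k X = 0) :
    X.character = 0 := by
  have : Subsingleton X := finrank_zero_iff.mp h
  ext g
  simp [character, Subsingleton.elim (X.ρ g) 0]

theorem char_one_ne_zero [CharZero k] (X : FDRep k G) [Simple X] : X.character 1 ≠ 0 := by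
  rw [char_one, Nat.cast_ne_zero]
  exact mt isZero_iff_finrank_eq_zero.mpr (Simple.not_isZero X)

theorem finrank_eq_add_of_isBilimit {Y Z : FDRep k G} {b : BinaryBicone Y Z}
    (hb : b.IsBilimit) : finrank k b.pt = finrank k Y + finrank k Z := by
  have h₁ : ∀ y, b.fst.hom.hom.hom (b.inl.hom.hom.hom y) = y :=
    LinearMap.congr_fun (congrArg (fun f => f.hom.hom.hom) b.inl_fst)
  have h₂ : ∀ y, b.snd.hom.hom.hom (b.inl.hom.hom.hom y) = 0 :=
    LinearMap.congr_fun (congrArg (fun f => f.hom.hom.hom) b.inl_snd)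
  have h₃ : ∀ z, b.fst.hom.hom.hom (b.inr.hom.hom.hom z) = 0 :=
    LinearMap.congr_fun (congrArg (fun f => f.hom.hom.hom) b.inr_fst)
  have h₄ : ∀ z, b.snd.hom.hom.hom (b.inr.hom.hom.hom z) = z :=
    LinearMap.congr_fun (congrArg (fun f => f.hom.hom.hom) b.inr_snd)
  have h₅ : ∀ x, b.inl.hom.hom.hom (b.fst.hom.hom.hom x) +
      b.inr.hom.hom.hom (b.snd.hom.hom.hom x) = x :=
    LinearMap.congr_fun (congrArg (fun f => f.hom.hom.hom) (IsBilimit.binary_total hb))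
  let e : b.pt ≃ₗ[k] Y × Z := LinearEquiv.ofLinearMap
    (b.fst.hom.hom.hom.prod b.snd.hom.hom.hom) (b.inl.hom.hom.hom.coprod b.inr.hom.hom.hom)
    (by ext <;> simp [h₁, h₂, h₃, h₄]) (by ext x; simp [h₅])
  rw [e.finrank_eq, finrank_prod]

theorem trace_ρ_comp_of_comp_eq_id {X Y : FDRep k G} (p : X ⟶ Y) (i : Y ⟶ X)
    (hip : i ≫ p = 𝟙 Y) (g : G) :
    LinearMap.trace k X (X.ρ g ∘ₗ i.hom.hom.hom ∘ₗ p.hom.hom.hom) = Y.character g := by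
  have hp : p.hom.hom.hom ∘ₗ X.ρ g = Y.ρ g ∘ₗ p.hom.hom.hom :=
    congrArg (fun f => f.hom.hom) (p.comm g)
  have hip' : p.hom.hom.hom ∘ₗ i.hom.hom.hom = LinearMap.id :=
    congrArg (fun f => f.hom.hom.hom) hip
  rw [← LinearMap.comp_assoc, LinearMap.trace_comp_comm', ← LinearMap.comp_assoc, hp,
    LinearMap.comp_assoc, hip', LinearMap.comp_id]
  rfl

theorem char_eq_add_of_isBilimit {Y Z : FDRep k G} {b : BinaryBicone Y Z}
    (hb : b.IsBilimit) : b.pt.character = Y.character + Z.character := by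
  ext g
  have htotal :
      b.inl.hom.hom.hom ∘ₗ b.fst.hom.hom.hom + b.inr.hom.hom.hom ∘ₗ b.snd.hom.hom.hom =
        LinearMap.id :=
    congrArg (fun f => f.hom.hom.hom) (IsBilimit.binary_total hb)
  rw [Pi.add_apply, ← trace_ρ_comp_of_comp_eq_id _ _ b.inl_fst,
    ← trace_ρ_comp_of_comp_eq_id _ _ b.inr_snd, ← map_add, ← LinearMap.comp_add, htotal,
    LinearMap.comp_id]
  rfl

end Monoid

section Group

variable {k G : Type u} [Field k] [Group G]

theorem char_one_mul_sum_char_mul [IsAlgClosed k] (V : FDRep k G) [Simple V]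
    (S : Finset G) (hS : ∀ g, ∀ x ∈ S, g * x * g⁻¹ ∈ S) (z : G) :
    V.character 1 * ∑ x ∈ S, V.character (z * x) =
      (∑ x ∈ S, V.character x) * V.character z := by
  let T : Module.End k V := ∑ x ∈ S, V.ρ x
  have hconj : ∀ g, ∑ x ∈ S, V.ρ (g * x * g⁻¹) = T := fun g =>
    Finset.sum_equiv (MulAut.conj g).toEquiv
      (fun x => ⟨hS g x, fun hx => by simpa [mul_assoc] using hS g⁻¹ _ hx⟩) (fun _ _ => rfl)
  have hcomm : ∀ g, V.ρ g * T = T * V.ρ g := fun g => by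
    conv_rhs => rw [← hconj g]
    rw [Finset.mul_sum, Finset.sum_mul]
    refine Finset.sum_congr rfl fun x _ => ?_
    rw [← map_mul, ← map_mul, inv_mul_cancel_right]
  let τ : V ⟶ V := ⟨FGModuleCat.ofHom T, fun g => by
    ext v; exact LinearMap.congr_fun (hcomm g).symm v⟩
  obtain ⟨c, hc⟩ := endomorphism_simple_eq_smul_id k τ
  have hT : T = c • 1 := (congrArg (fun f => f.hom.hom.hom) hc).symm
  have htrace : ∀ z, ∑ x ∈ S, V.character (z * x) = c * V.character z := fun z => by
    simp only [character, map_mul, ← map_sum, ← Finset.mul_sum]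
    change LinearMap.trace k V (V.ρ z * T) = _
    rw [hT, mul_smul_comm, mul_one, map_smul, smul_eq_mul]
  have hsum : ∑ x ∈ S, V.character x = c * V.character 1 := by
    simpa using htrace 1
  rw [htrace, hsum]
  ring

theorem char_one_sq_mul_sum_char_mul_mul [IsAlgClosed k] (V : FDRep k G) [Simple V]
    (S₁ S₂ S₃ : Finset G) (hS₂ : ∀ g, ∀ x ∈ S₂, g * x * g⁻¹ ∈ S₂)
    (hS₃ : ∀ g, ∀ x ∈ S₃, g * x * g⁻¹ ∈ S₃) :
    V.character 1 ^ 2 * ∑ t ∈ S₁ ×ˢ S₂ ×ˢ S₃, V.character (t.1 * t.2.1 * t.2.2) =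
      (∑ x ∈ S₁, V.character x) * (∑ y ∈ S₂, V.character y) *
        (∑ z ∈ S₃, V.character z) := by
  simp only [Finset.sum_product]
  calc V.character 1 ^ 2 * ∑ x ∈ S₁, ∑ y ∈ S₂, ∑ z ∈ S₃, V.character (x * y * z)
      = V.character 1 * ∑ x ∈ S₁, ∑ y ∈ S₂,
          V.character 1 * ∑ z ∈ S₃, V.character (x * y * z) := by
        simp only [Finset.mul_sum]; ring_nf
    _ = V.character 1 * ∑ x ∈ S₁, ∑ y ∈ S₂,
          (∑ z ∈ S₃, V.character z) * V.character (x * y) := by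
        simp only [char_one_mul_sum_char_mul V S₃ hS₃]
    _ = (∑ z ∈ S₃, V.character z) * ∑ x ∈ S₁,
          V.character 1 * ∑ y ∈ S₂, V.character (x * y) := by
        simp only [Finset.mul_sum]; ring_nf
    _ = (∑ z ∈ S₃, V.character z) * ∑ x ∈ S₁,
          (∑ y ∈ S₂, V.character y) * V.character x := by
        simp only [char_one_mul_sum_char_mul V S₂ hS₂]
    _ = _ := by
        rw [← Finset.mul_sum]; ring

theorem sum_char_of_mem_iff_isConj (V : FDRep k G) {g : G} {S : Finset G}
    (hS : ∀ x, x ∈ S ↔ IsConj g x) : ∑ x ∈ S, V.character x = S.card * V.character g := by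
  rw [Finset.sum_congr rfl fun x hx => ?_, Finset.sum_const, nsmul_eq_mul]
  obtain ⟨c, rfl⟩ := isConj_iff.mp ((hS x).mp hx)
  exact char_conj V g c

variable [Fintype G]

theorem char_ofMulAction_self [DecidableEq G] (g : G) :
    (FDRep.of (Representation.ofMulAction k G G)).character g =
      if g = 1 then (Nat.card G : k) else 0 := by
  let b := MonoidAlgebra.basis G k
  have hdiag : ∀ h, b.repr (Representation.ofMulAction k G G g (b h)) h =
      if g * h = h then 1 else 0 := fun h => by
    rw [MonoidAlgebra.basis_apply, Representation.ofMulAction_single, smul_eq_mul,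
      ← MonoidAlgebra.basis_apply, Basis.repr_self, Finsupp.single_apply]
  change LinearMap.trace k (MonoidAlgebra k G) (Representation.ofMulAction k G G g) = _
  simp only [LinearMap.trace_eq_matrix_trace k b, Matrix.trace, Matrix.diag_apply,
    LinearMap.toMatrix_apply, hdiag, mul_eq_right]
  split_ifs <;> simp [Nat.card_eq_fintype_card]

variable [NeZero (Nat.card G : k)] {ι : Type*} {V : ι → FDRep k G}

theorem exists_char_eq_sum_nsmul [Fintype ι]
    (hcomplete : ∀ W : FDRep k G, Simple W → ∃ i, Nonempty (W ≅ V i)) (X : FDRep k G) :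
    ∃ m : ι → ℕ, X.character = ∑ i, m i • (V i).character := by
  classical
  induction hn : finrank k X using Nat.strong_induction_on generalizing X with
  | _ n ih =>
  by_cases hX : finrank k X = 0
  · exact ⟨0, by simp [char_eq_zero_of_finrank_eq_zero hX]⟩
  by_cases hs : Simple X
  · obtain ⟨i, ⟨e⟩⟩ := hcomplete X hs
    exact ⟨Pi.single i 1, by simp [char_iso e, Pi.single_apply]⟩
  obtain ⟨Y, Z, b, ⟨hb⟩, rfl, hY, hZ⟩ :=
    exists_isBilimit_of_not_simple (mt isZero_iff_finrank_eq_zero.mp hX) hs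
  rw [isZero_iff_finrank_eq_zero] at hY hZ
  have hdim := finrank_eq_add_of_isBilimit hb
  obtain ⟨mY, hmY⟩ := ih _ (by omega) Y rfl
  obtain ⟨mZ, hmZ⟩ := ih _ (by omega) Z rfl
  refine ⟨mY + mZ, ?_⟩
  simp [char_eq_add_of_isBilimit hb, hmY, hmZ, add_smul, Finset.sum_add_distrib]

variable [IsAlgClosed k]

theorem sum_char_mul_char_inv (hsimple : ∀ i, Simple (V i))
    (hdistinct : ∀ i j, Nonempty (V i ≅ V j) → i = j) [DecidableEq ι] (i j : ι) :
    ∑ g, (V i).character g * (V j).character g⁻¹ = if i = j then (Nat.card G : k) else 0 := by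
  have := invertibleOfNonzero (NeZero.ne (Nat.card G : k))
  have h := char_orthonormal (V i) (V j)
  rw [inv_mul_eq_iff_eq_mul₀ (NeZero.ne _)] at h
  rw [h]
  by_cases hij : i = j
  · subst hij; simp [Nonempty.intro (Iso.refl _)]
  · simp [hij, mt (hdistinct i j) hij]

theorem sum_char_one_mul_char [Fintype ι] [DecidableEq G] (hsimple : ∀ i, Simple (V i))
    (hdistinct : ∀ i j, Nonempty (V i ≅ V j) → i = j)
    (hcomplete : ∀ W : FDRep k G, Simple W → ∃ i, Nonempty (W ≅ V i)) (g : G) :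
    ∑ i, (V i).character 1 * (V i).character g = if g = 1 then (Nat.card G : k) else 0 := by
  classical
  obtain ⟨m, hm⟩ := exists_char_eq_sum_nsmul hcomplete
    (FDRep.of (Representation.ofMulAction k G G))
  have hm_eq : ∀ j, (m j : k) = (V j).character 1 := fun j => by
    have h := congrArg (fun χ => ∑ g, χ g * (V j).character g⁻¹) hm
    simp only [char_ofMulAction_self, ite_mul, zero_mul, Finset.sum_ite_eq',
      Finset.mem_univ, if_true, inv_one, Finset.sum_apply, nsmul_eq_mul, Pi.mul_apply,
      Pi.natCast_apply, Finset.sum_mul, mul_assoc] at h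
    rw [Finset.sum_comm] at h
    simp only [← Finset.mul_sum, sum_char_mul_char_inv hsimple hdistinct, mul_ite,
      mul_zero, Finset.sum_ite_eq', Finset.mem_univ, if_true] at h
    exact mul_right_cancel₀ (NeZero.ne _) (h.symm.trans (mul_comm _ _))
  rw [← char_ofMulAction_self, hm]
  simp [Finset.sum_apply, hm_eq]

theorem natCard_mul_sum_ite_mul_mul_eq_one [CharZero k] [Fintype ι] [DecidableEq G]
    (hsimple : ∀ i, Simple (V i)) (hdistinct : ∀ i j, Nonempty (V i ≅ V j) → i = j)
    (hcomplete : ∀ W : FDRep k G, Simple W → ∃ i, Nonempty (W ≅ V i)) (S₁ S₂ S₃ : Finset G)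
    (hS₂ : ∀ g, ∀ x ∈ S₂, g * x * g⁻¹ ∈ S₂) (hS₃ : ∀ g, ∀ x ∈ S₃, g * x * g⁻¹ ∈ S₃) :
    (Nat.card G : k) * ∑ t ∈ S₁ ×ˢ S₂ ×ˢ S₃, (if t.1 * t.2.1 * t.2.2 = 1 then 1 else 0) =
      ∑ i, (∑ x ∈ S₁, (V i).character x) * (∑ y ∈ S₂, (V i).character y) *
        (∑ z ∈ S₃, (V i).character z) / (V i).character 1 := by
  calc (Nat.card G : k) * ∑ t ∈ S₁ ×ˢ S₂ ×ˢ S₃, (if t.1 * t.2.1 * t.2.2 = 1 then 1 else 0)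
      = ∑ t ∈ S₁ ×ˢ S₂ ×ˢ S₃, ∑ i,
          (V i).character 1 * (V i).character (t.1 * t.2.1 * t.2.2) := by
        simp only [Finset.mul_sum, sum_char_one_mul_char hsimple hdistinct hcomplete, mul_ite,
          mul_one, mul_zero]
    _ = ∑ i, (V i).character 1 *
          ∑ t ∈ S₁ ×ˢ S₂ ×ˢ S₃, (V i).character (t.1 * t.2.1 * t.2.2) := by
        rw [Finset.sum_comm]; simp only [Finset.mul_sum]
    _ = _ := Finset.sum_congr rfl fun i _ => by
        rw [eq_div_iff (char_one_ne_zero (V i)),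
          ← char_one_sq_mul_sum_char_mul_mul (V i) S₁ S₂ S₃ hS₂ hS₃]
        ring

end Group

end FDRep

open FDRep

/-- Frobenius's structure constant formula:  the number of triples `(x,y,z)` in
`C₁ × C₂ × C₃` with `x*y*z = 1` equals
`(|C₁|·|C₂|·|C₃|/|G|) · Σ_{χ ∈ Irr(G)} χ(g₁)χ(g₂)χ(g₃)/χ(1)`, where the irreducible
complex characters are given by a complete family of pairwise non-isomorphic simple
representations. -/
theorem frobenius_structure_constant_formula (G : Type) [Group G] [Fintype G]
    {ι : Type*} [Fintype ι] (V : ι → FDRep ℂ G)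
    (hsimple : ∀ i, Simple (V i))
    (hdistinct : ∀ i j : ι, Nonempty (V i ≅ V j) → i = j)
    (hcomplete : ∀ W : FDRep ℂ G, Simple W → ∃ i, Nonempty (W ≅ V i))
    (g₁ g₂ g₃ : G) (C₁ C₂ C₃ : Set G)
    (hC₁ : C₁ = {x | IsConj g₁ x}) (hC₂ : C₂ = {x | IsConj g₂ x})
    (hC₃ : C₃ = {x | IsConj g₃ x}) :
    (Nat.card {t : G × G × G //
        t.1 ∈ C₁ ∧ t.2.1 ∈ C₂ ∧ t.2.2 ∈ C₃ ∧ t.1 * t.2.1 * t.2.2 = 1} : ℂ) =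
      ((Nat.card C₁ : ℂ) * (Nat.card C₂ : ℂ) * (Nat.card C₃ : ℂ) / (Nat.card G : ℂ)) *
        ∑ i : ι, (V i).character g₁ * (V i).character g₂ * (V i).character g₃ /
          (V i).character 1 := by
  classical
  let S : G → Finset G := fun g => Finset.univ.filter (IsConj g)
  have hS : ∀ g x, x ∈ S g ↔ IsConj g x := by simp [S]
  have hC : ∀ g, {x | IsConj g x} = (S g : Set G) := fun g => by ext; simp [S]
  subst hC₁ hC₂ hC₃
  simp only [hC, Finset.mem_coe, natCard_subtype_mul_mul_eq_one, Nat.card_eq_finsetCard,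
    Finset.coe_sort_coe]
  have key := natCard_mul_sum_ite_mul_mul_eq_one (k := ℂ) hsimple hdistinct hcomplete
    (S g₁) (S g₂) (S g₃) (conj_mem_of_forall_mem_iff_isConj (hS g₂))
    (conj_mem_of_forall_mem_iff_isConj (hS g₃))
  simp only [sum_char_of_mem_iff_isConj _ (hS _)] at key
  push_cast
  rw [div_mul_eq_mul_div, eq_div_iff (NeZero.ne _), mul_comm, key, Finset.mul_sum]
  exact Finset.sum_congr rfl fun i _ => by ring
end
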